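/- arXiv:2601.12655 — 2 statements merged into one kernel-verified Lean document; each statement's English description precedes it below -/
import Mathlib

section
/- In the N-class model with N = 2, κ ∈ (1,2), and premiums c¹ = (θ₁, κθ₁), c² = (θ₂, κθ₂) where θ₁, θ₂ ∈ [μ, M/κ], the unique fixed point V* of the Bellman operator L_c satisfies: the quantity V*(n,i) − δ·cⁱ_n is equal to one and the same constant for all four states (n,i) ∈ {1,2} × {1,2} (i.e. V*(1,1) − δθ₁ = V*(2,1) − δκθ₁ = V*(1,2) − δθ₂ = V*(2,2) − δκθ₂). -/
/-!
With two companies the switching probabilities satisfy `σ(n,2) = 1 − σ(n,1)`, so both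
continuation values `W↓(n,i;v)` and `W↑(n,i;v)` are the same for either company `i`; with two
classes `n↓ = 1` and `n↑ = 2` for every `n`, so they do not depend on `n` either. Hence the
Bellman objective at every state is `δ·cⁱₙ` plus one common function of the barrier `b`, so
`L_c v (n,i) − δ·cⁱₙ` is the same infimum at every state. Pulling the constant out of the
infimum needs the objective to be bounded below (otherwise `⨅` over `ℝ` is the junk value `0`);
this holds because the loss cdf lies in `[0,1]`. Applied to `v = V*` this is the claim.
-/

noncomputable section

open MeasureTheory Set

/-- Cumulative distribution function of the loss: point mass `p₀` at zero plus density `fL`. -/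
def lossCdf (p₀ : ℝ) (fL : ℝ → ℝ) (x : ℝ) : ℝ := p₀ + ∫ ℓ in (0:ℝ)..x, fL ℓ

/-- Rate class after a bonus: `n↓ = max(n−1,1)` (classes are 0-indexed by `Fin N`). -/
def rdown {N : ℕ} (n : Fin N) : Fin N :=
  ⟨n.val - 1, lt_of_le_of_lt (Nat.sub_le _ _) n.isLt⟩

/-- Rate class after a malus: `n↑ = min(n+1,N)` (classes are 0-indexed by `Fin N`). -/
def rup {N : ℕ} (n : Fin N) : Fin N :=
  if h : n.val + 1 < N then ⟨n.val + 1, h⟩ else n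

/-- Company-switching probability `σ(n,i)`; company `0` is Company 1, company `1` is
Company 2, and `c i` is the premium schedule of company `i`. -/
def swProb {N : ℕ} (η : ℝ → ℝ) (c : Fin 2 → Fin N → ℝ) (n : Fin N) (i : Fin 2) : ℝ :=
  if i = 0 then 1 - η (c 1 (rdown n) - c 0 (rdown n))
  else η (c 1 (rdown n) - c 0 (rdown n))

/-- Continuation value after a bonus: `W↓(n,i;v)`. (`i + 1` in `Fin 2` is the other company.) -/
def Wdown {N : ℕ} (η : ℝ → ℝ) (c : Fin 2 → Fin N → ℝ) (v : Fin N × Fin 2 → ℝ)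
    (n : Fin N) (i : Fin 2) : ℝ :=
  (1 - swProb η c n i) * v (rdown n, i) + swProb η c n i * v (rdown n, i + 1)

/-- Continuation value after a malus: `W↑(n,i;v)`. -/
def Wup {N : ℕ} (η : ℝ → ℝ) (c : Fin 2 → Fin N → ℝ) (v : Fin N × Fin 2 → ℝ)
    (n : Fin N) (i : Fin 2) : ℝ :=
  (1 - swProb η c n i) * v (rup n, i) + swProb η c n i * v (rup n, i + 1)

/-- One-step Bellman objective in the reporting barrier `b`. -/
def bellObj {N : ℕ} (p₀ δ : ℝ) (fL η : ℝ → ℝ) (c : Fin 2 → Fin N → ℝ)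
    (v : Fin N × Fin 2 → ℝ) (x : Fin N × Fin 2) (b : ℝ) : ℝ :=
  δ * (c x.2 x.1 + (∫ ℓ in (0:ℝ)..b, ℓ * fL ℓ)
    + lossCdf p₀ fL b * Wdown η c v x.1 x.2
    + (1 - lossCdf p₀ fL b) * Wup η c v x.1 x.2)

/-- The Bellman operator `L_c`. -/
def bellOp {N : ℕ} (p₀ δ : ℝ) (fL η : ℝ → ℝ) (c : Fin 2 → Fin N → ℝ)
    (v : Fin N × Fin 2 → ℝ) (x : Fin N × Fin 2) : ℝ :=
  ⨅ b : {b : ℝ // 0 ≤ b}, bellObj p₀ δ fL η c v x b.1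

/-- The set of admissible premium pairs. -/
def premSet (N : ℕ) (μ M : ℝ) : Set (Fin 2 → Fin N → ℝ) :=
  {c | ∀ i : Fin 2, Monotone (c i) ∧ ∀ n : Fin N, c i n ∈ Set.Icc μ M}


/-- The 2-class premium schedules `c¹ = (θ₁, κθ₁)`, `c² = (θ₂, κθ₂)`:
company `0` is Company 1 (base premium `θ₁`), class `0` is Class 1. -/
def prem2 (κ θ₁ θ₂ : ℝ) : Fin 2 → Fin 2 → ℝ := fun i n =>
  (if i = 0 then θ₁ else θ₂) * (if n = 0 then 1 else κ)

section ContinuationValue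

variable {N : ℕ} (η : ℝ → ℝ) (c : Fin 2 → Fin N → ℝ) (v : Fin N × Fin 2 → ℝ)

theorem Wdown_company_eq (n : Fin N) (i j : Fin 2) : Wdown η c v n i = Wdown η c v n j := by
  have h : Wdown η c v n 0 = Wdown η c v n 1 := by
    simp only [Wdown, swProb, Fin.isValue, one_ne_zero, ↓reduceIte, Fin.reduceAdd]
    ring
  fin_cases i <;> fin_cases j
  exacts [rfl, h, h.symm, rfl]

theorem Wup_company_eq (n : Fin N) (i j : Fin 2) : Wup η c v n i = Wup η c v n j := by
  have h : Wup η c v n 0 = Wup η c v n 1 := by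
    simp only [Wup, swProb, Fin.isValue, one_ne_zero, ↓reduceIte, Fin.reduceAdd]
    ring
  fin_cases i <;> fin_cases j
  exacts [rfl, h, h.symm, rfl]

theorem Wdown_eq_of_rdown_eq {n n' : Fin N} (h : rdown n = rdown n') (i : Fin 2) :
    Wdown η c v n i = Wdown η c v n' i := by
  simp only [Wdown, swProb, h]

theorem Wup_eq_of_rdown_eq_of_rup_eq {n n' : Fin N} (hd : rdown n = rdown n')
    (hu : rup n = rup n') (i : Fin 2) : Wup η c v n i = Wup η c v n' i := by
  simp only [Wup, swProb, hd, hu]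

end ContinuationValue

theorem rdown_fin_two (n : Fin 2) : rdown n = 0 := by
  fin_cases n <;> rfl

theorem rup_fin_two (n : Fin 2) : rup n = 1 := by
  fin_cases n <;> rfl

section TwoClasses

variable (η : ℝ → ℝ) (c : Fin 2 → Fin 2 → ℝ) (v : Fin 2 × Fin 2 → ℝ)

theorem Wdown_fin_two (n n' i i' : Fin 2) : Wdown η c v n i = Wdown η c v n' i' :=
  (Wdown_company_eq η c v n i i').trans <|
    Wdown_eq_of_rdown_eq η c v (by rw [rdown_fin_two, rdown_fin_two]) i'

theorem Wup_fin_two (n n' i i' : Fin 2) : Wup η c v n i = Wup η c v n' i' :=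
  (Wup_company_eq η c v n i i').trans <|
    Wup_eq_of_rdown_eq_of_rup_eq η c v (by rw [rdown_fin_two, rdown_fin_two])
      (by rw [rup_fin_two, rup_fin_two]) i'

theorem bellObj_sub_prem_fin_two {p₀ δ : ℝ} {fL : ℝ → ℝ} (x y : Fin 2 × Fin 2) (b : ℝ) :
    bellObj p₀ δ fL η c v x b - δ * c x.2 x.1 = bellObj p₀ δ fL η c v y b - δ * c y.2 y.1 := by
  simp only [bellObj]
  rw [Wdown_fin_two η c v x.1 y.1 x.2 y.2, Wup_fin_two η c v x.1 y.1 x.2 y.2]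
  ring

end TwoClasses

section LossDistribution

variable {p₀ : ℝ} {fL : ℝ → ℝ} {b : ℝ}

theorem intervalIntegral_nonneg_of_pos {g : ℝ → ℝ} (hg : ∀ ℓ, 0 < ℓ → 0 ≤ g ℓ) (hb : 0 ≤ b) :
    0 ≤ ∫ ℓ in (0:ℝ)..b, g ℓ := by
  rw [intervalIntegral.integral_of_le hb]
  exact setIntegral_nonneg measurableSet_Ioc fun ℓ hℓ => hg ℓ hℓ.1

theorem lossCdf_nonneg (hp₀ : 0 ≤ p₀) (hf : ∀ ℓ, 0 < ℓ → 0 ≤ fL ℓ) (hb : 0 ≤ b) :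
    0 ≤ lossCdf p₀ fL b :=
  add_nonneg hp₀ (intervalIntegral_nonneg_of_pos hf hb)

theorem lossCdf_le_one (hf : ∀ ℓ, 0 < ℓ → 0 ≤ fL ℓ) (hfint : IntegrableOn fL (Ioi 0))
    (hftot : ∫ ℓ in Ioi (0:ℝ), fL ℓ = 1 - p₀) (hb : 0 ≤ b) : lossCdf p₀ fL b ≤ 1 := by
  have hmono : ∫ ℓ in Ioc (0:ℝ) b, fL ℓ ≤ ∫ ℓ in Ioi (0:ℝ), fL ℓ :=
    setIntegral_mono_set hfint
      ((ae_restrict_iff' measurableSet_Ioi).2 (Filter.Eventually.of_forall hf))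
      Ioc_subset_Ioi_self.eventuallyLE
  rw [lossCdf, intervalIntegral.integral_of_le hb]
  linarith

end LossDistribution

section BellmanOperator

variable {N : ℕ} {p₀ δ : ℝ} {fL : ℝ → ℝ} (η : ℝ → ℝ) (c : Fin 2 → Fin N → ℝ)
  (v : Fin N × Fin 2 → ℝ)

theorem bellObj_bddBelow (hδ : 0 ≤ δ) (hp₀ : 0 ≤ p₀) (hf : ∀ ℓ, 0 < ℓ → 0 ≤ fL ℓ)
    (hfint : IntegrableOn fL (Ioi 0)) (hftot : ∫ ℓ in Ioi (0:ℝ), fL ℓ = 1 - p₀)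
    (x : Fin N × Fin 2) :
    BddBelow (range fun b : {b : ℝ // 0 ≤ b} => bellObj p₀ δ fL η c v x b.1) := by
  set D := Wdown η c v x.1 x.2
  set U := Wup η c v x.1 x.2
  refine ⟨δ * (c x.2 x.1 + min D U), ?_⟩
  rintro _ ⟨⟨b, hb⟩, rfl⟩
  have hF0 := lossCdf_nonneg hp₀ hf hb
  have hF1 := lossCdf_le_one hf hfint hftot hb
  have hloss := intervalIntegral_nonneg_of_pos (fun ℓ hℓ => mul_nonneg hℓ.le (hf ℓ hℓ)) hb
  have hmix : min D U ≤ lossCdf p₀ fL b * D + (1 - lossCdf p₀ fL b) * U := by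
    nlinarith [min_le_left D U, min_le_right D U]
  exact mul_le_mul_of_nonneg_left (by linarith) hδ

theorem bellOp_sub_prem {x : Fin N × Fin 2}
    (hbdd : BddBelow (range fun b : {b : ℝ // 0 ≤ b} => bellObj p₀ δ fL η c v x b.1)) :
    bellOp p₀ δ fL η c v x - δ * c x.2 x.1
      = ⨅ b : {b : ℝ // 0 ≤ b}, (bellObj p₀ δ fL η c v x b.1 - δ * c x.2 x.1) := by
  have : Nonempty {b : ℝ // 0 ≤ b} := ⟨⟨0, le_rfl⟩⟩
  simpa [bellOp, sub_eq_add_neg] using (OrderIso.addRight (-(δ * c x.2 x.1))).map_ciInf hbdd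

end BellmanOperator

theorem bellOp_sub_prem_fin_two {p₀ δ : ℝ} {fL : ℝ → ℝ} (η : ℝ → ℝ) (c : Fin 2 → Fin 2 → ℝ)
    (v : Fin 2 × Fin 2 → ℝ) (hδ : 0 ≤ δ) (hp₀ : 0 ≤ p₀) (hf : ∀ ℓ, 0 < ℓ → 0 ≤ fL ℓ)
    (hfint : IntegrableOn fL (Ioi 0)) (hftot : ∫ ℓ in Ioi (0:ℝ), fL ℓ = 1 - p₀)
    (x y : Fin 2 × Fin 2) :
    bellOp p₀ δ fL η c v x - δ * c x.2 x.1 = bellOp p₀ δ fL η c v y - δ * c y.2 y.1 := by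
  rw [bellOp_sub_prem η c v (bellObj_bddBelow η c v hδ hp₀ hf hfint hftot x),
    bellOp_sub_prem η c v (bellObj_bddBelow η c v hδ hp₀ hf hfint hftot y)]
  exact iInf_congr fun b => bellObj_sub_prem_fin_two η c v x y b.1

theorem stmt_6_general (p₀ δ κ θ₁ θ₂ : ℝ) (fL η : ℝ → ℝ)
    (hp₀ : p₀ ∈ Set.Ioo (0:ℝ) 1) (hδ : δ ∈ Set.Ioo (0:ℝ) 1)
    (hfpos : ∀ ℓ : ℝ, 0 < ℓ → 0 < fL ℓ)
    (hfint : IntegrableOn fL (Set.Ioi 0))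
    (hftot : ∫ ℓ in Set.Ioi (0:ℝ), fL ℓ = 1 - p₀)
    (V : Fin 2 × Fin 2 → ℝ)
    (hV : bellOp p₀ δ fL η (prem2 κ θ₁ θ₂) V = V) :
    ∃ K : ℝ, ∀ x : Fin 2 × Fin 2, V x - δ * prem2 κ θ₁ θ₂ x.2 x.1 = K := by
  refine ⟨V (0, 0) - δ * prem2 κ θ₁ θ₂ 0 0, fun x => ?_⟩
  have h := bellOp_sub_prem_fin_two η (prem2 κ θ₁ θ₂) V hδ.1.le hp₀.1.le
    (fun ℓ hℓ => (hfpos ℓ hℓ).le) hfint hftot x (0, 0)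
  rwa [hV] at h

/-- in the 2-class case, the fixed point `V*` of the Bellman operator
satisfies that `V*(n,i) − δ·cⁱₙ` is one and the same constant over all four states. -/
theorem stmt_6 (p₀ δ μ M κ θ₁ θ₂ : ℝ) (fL η : ℝ → ℝ)
    (hp₀ : p₀ ∈ Set.Ioo (0:ℝ) 1) (hδ : δ ∈ Set.Ioo (0:ℝ) 1)
    (hκ : κ ∈ Set.Ioo (1:ℝ) 2)
    (hfc : ContinuousOn fL (Set.Ioi 0)) (hfpos : ∀ ℓ : ℝ, 0 < ℓ → 0 < fL ℓ)
    (hfint : IntegrableOn fL (Set.Ioi 0))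
    (hftot : ∫ ℓ in Set.Ioi (0:ℝ), fL ℓ = 1 - p₀)
    (hmint : IntegrableOn (fun ℓ => ℓ * fL ℓ) (Set.Ioi 0))
    (hμ : μ = ∫ ℓ in Set.Ioi (0:ℝ), ℓ * fL ℓ) (hμpos : 0 < μ) (hM : κ * μ ≤ M)
    (hηc : Continuous η) (hηm : Monotone η) (hη01 : ∀ t : ℝ, η t ∈ Set.Icc (0:ℝ) 1)
    (hθ₁ : θ₁ ∈ Set.Icc μ (M / κ)) (hθ₂ : θ₂ ∈ Set.Icc μ (M / κ))
    (V : Fin 2 × Fin 2 → ℝ)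
    (hV : bellOp p₀ δ fL η (prem2 κ θ₁ θ₂) V = V)
    (hVuniq : ∀ v : Fin 2 × Fin 2 → ℝ,
      bellOp p₀ δ fL η (prem2 κ θ₁ θ₂) v = v → v = V) :
    ∃ K : ℝ, ∀ x : Fin 2 × Fin 2, V x - δ * prem2 κ θ₁ θ₂ x.2 x.1 = K :=
  stmt_6_general p₀ δ κ θ₁ θ₂ fL η hp₀ hδ hfpos hfint hftot V hV

end
end

section
/- In the 2-class premium game, assume ℓ·f_L(ℓ) ≤ 1/((1−δ)(κ−1)) for all ℓ ∈ I_L, and let (θ₁*, θ₂*) ∈ Θ² be an equilibrium premium pair (i.e. θ₁* maximizes J¹(·; θ₂*) over Θ and θ₂* maximizes J²(·; θ₁*) over Θ). Then: if k₂ ≥ 1/2 then θ₁* ≥ θ₂*; if k₂ ≤ 1/2 then θ₁* ≤ θ₂*; and if k₂ = 1/2 then θ₁* = θ₂*. -/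
/-
Suppose `k₂ ≥ 1/2` but `θ₁* < θ₂*`. On the region `θ₁ < θ₂` both profits are differentiable,
Company 1's share is `η̄ = 1 - (1 - k₂) e^{-k₁(θ₂ - θ₁)} ∈ [1/2, 1)` and `dη̄/dt = k₁(1 - η̄)`.
Since `θ₁*` can still move up and `θ₂*` can still move down inside `Θ`, the one-sided first-order
conditions give `∂J¹/∂θ₁ ≤ 0 ≤ ∂J²/∂θ₂`. But the difference of the two marginal profits factors as
  `(2η̄ - 1 + k₁(1 - η̄)(θ₂ - θ₁)) (b* f_L(b*)(1 - δ)(κ - 1) - (a + κ(1 - a)))`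
  `  - δ(κ - 1)² η̄ (1 - η̄)(θ₂ - θ₁) f_L(b*)`,
whose first term is `≤ 0` by the density bound on `I_L ∋ b*` and `a ≤ 1`, and whose second term
is `< 0`: so `∂J²/∂θ₂ < ∂J¹/∂θ₁`, a contradiction. Exchanging the two companies replaces `k₂`
by `1 - k₂`, which gives the case `k₂ ≤ 1/2`.
-/

noncomputable section

open MeasureTheory Set

/-- The exponential choice function `η`. -/
def expEta (k₁ k₂ t : ℝ) : ℝ :=
  if 0 ≤ t then 1 - (1 - k₂) * Real.exp (-(k₁ * t)) else k₂ * Real.exp (k₁ * t)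

/-- Insureds' optimal reporting barrier `b*(θ₁,θ₂) = δ(κ−1)(η̄θ₁ + (1−η̄)θ₂)`. -/
def repBarrier (δ κ k₁ k₂ θ₁ θ₂ : ℝ) : ℝ :=
  δ * (κ - 1) * (expEta k₁ k₂ (θ₂ - θ₁) * θ₁ + (1 - expEta k₁ k₂ (θ₂ - θ₁)) * θ₂)

/-- `a = F_L(b*(θ₁,θ₂))`: probability that the loss is hidden. -/
def aProb (p₀ : ℝ) (fL : ℝ → ℝ) (δ κ k₁ k₂ θ₁ θ₂ : ℝ) : ℝ :=
  lossCdf p₀ fL (repBarrier δ κ k₁ k₂ θ₁ θ₂)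

/-- `m = ∫_{b*(θ₁,θ₂)}^∞ ℓ f_L(ℓ) dℓ`: expected reported loss. -/
def mRep (fL : ℝ → ℝ) (δ κ k₁ k₂ θ₁ θ₂ : ℝ) : ℝ :=
  ∫ ℓ in Set.Ioi (repBarrier δ κ k₁ k₂ θ₁ θ₂), ℓ * fL ℓ

/-- Company 1's expected per-period profit `J¹(θ₁;θ₂)`. -/
def J1 (p₀ : ℝ) (fL : ℝ → ℝ) (δ κ k₁ k₂ θ₁ θ₂ : ℝ) : ℝ :=
  expEta k₁ k₂ (θ₂ - θ₁) *
    (θ₁ * (aProb p₀ fL δ κ k₁ k₂ θ₁ θ₂ + κ * (1 - aProb p₀ fL δ κ k₁ k₂ θ₁ θ₂))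
      - mRep fL δ κ k₁ k₂ θ₁ θ₂)

/-- Company 2's expected per-period profit `J²(θ₂;θ₁)`. -/
def J2 (p₀ : ℝ) (fL : ℝ → ℝ) (δ κ k₁ k₂ θ₂ θ₁ : ℝ) : ℝ :=
  (1 - expEta k₁ k₂ (θ₂ - θ₁)) *
    (θ₂ * (aProb p₀ fL δ κ k₁ k₂ θ₁ θ₂ + κ * (1 - aProb p₀ fL δ κ k₁ k₂ θ₁ θ₂))
      - mRep fL δ κ k₁ k₂ θ₁ θ₂)

/-- `A₁ = k₂(2−δk₂)/(2−k₂)`. -/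
def A1 (δ k₂ : ℝ) : ℝ := k₂ * (2 - δ * k₂) / (2 - k₂)

/-- `A₂ = (1−k₂)(2−δ(1−k₂))/(1+k₂)`. -/
def A2 (δ k₂ : ℝ) : ℝ := (1 - k₂) * (2 - δ * (1 - k₂)) / (1 + k₂)

/-- `m₁ = k₁/(δ(κ−1)²k₂·max(2A₁, 2δ−A₁))`. -/
def m1 (δ κ k₁ k₂ : ℝ) : ℝ :=
  k₁ / (δ * (κ - 1) ^ 2 * k₂ * max (2 * A1 δ k₂) (2 * δ - A1 δ k₂))

/-- `m₂ = k₁/(δ(κ−1)²(1−k₂)·max(2A₂, 2δ−A₂))`. -/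
def m2 (δ κ k₁ k₂ : ℝ) : ℝ :=
  k₁ / (δ * (κ - 1) ^ 2 * (1 - k₂) * max (2 * A2 δ k₂) (2 * δ - A2 δ k₂))

/-- The premium strategy set `Θ = [μ, M/κ]`. -/
def Theta (μ M κ : ℝ) : Set ℝ := Set.Icc μ (M / κ)

/-- The interval `I_L = [δ(κ−1)μ, δ(κ−1)M/κ]` of possible barriers. -/
def IL (δ κ μ M : ℝ) : Set ℝ := Set.Icc (δ * (κ - 1) * μ) (δ * (κ - 1) * (M / κ))


open Filter

theorem HasDerivAt.nonpos_of_isMaxOn_Icc {f : ℝ → ℝ} {f' a b x : ℝ} (hf : HasDerivAt f f' x)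
    (hmax : IsMaxOn f (Icc a b) x) (hax : a ≤ x) (hxb : x < b) : f' ≤ 0 := by
  have hcone : b - x ∈ posTangentConeAt (Icc a b) x :=
    sub_mem_posTangentConeAt_of_segment_subset
      ((segment_eq_Icc hxb.le).trans_subset (Icc_subset_Icc_left hax))
  have := hmax.localize.hasFDerivWithinAt_nonpos hf.hasFDerivAt.hasFDerivWithinAt hcone
  exact nonpos_of_mul_nonpos_right (by simpa using this) (sub_pos.2 hxb)

theorem HasDerivAt.nonneg_of_isMaxOn_Icc {f : ℝ → ℝ} {f' a b x : ℝ} (hf : HasDerivAt f f' x)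
    (hmax : IsMaxOn f (Icc a b) x) (hax : a < x) (hxb : x ≤ b) : 0 ≤ f' := by
  have hcone : a - x ∈ posTangentConeAt (Icc a b) x :=
    sub_mem_posTangentConeAt_of_segment_subset
      ((segment_symm ℝ x a ▸ segment_eq_Icc hax.le).trans_subset (Icc_subset_Icc_right hxb))
  have := hmax.localize.hasFDerivWithinAt_nonpos hf.hasFDerivAt.hasFDerivWithinAt hcone
  exact nonneg_of_mul_nonpos_right (by simpa using this) (sub_neg.2 hax)

theorem hasDerivAt_lossCdf (p₀ : ℝ) {fL : ℝ → ℝ} {b : ℝ} (hfint : IntegrableOn fL (Ioi 0))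
    (hb : 0 < b) (hfb : ContinuousAt fL b) : HasDerivAt (lossCdf p₀ fL) (fL b) b :=
  (intervalIntegral.integral_hasDerivAt_right
    ((intervalIntegrable_iff_integrableOn_Ioc_of_le hb.le).2 (hfint.mono_set Ioc_subset_Ioi_self))
    (AEStronglyMeasurable.stronglyMeasurableAtFilter_of_mem hfint.aestronglyMeasurable
      (Ioi_mem_nhds hb)) hfb).const_add p₀

theorem hasDerivAt_integral_Ioi {g : ℝ → ℝ} {a b : ℝ} (hg : IntegrableOn g (Ioi a)) (hab : a < b)
    (hgb : ContinuousAt g b) : HasDerivAt (fun x => ∫ ℓ in Ioi x, g ℓ) (-g b) b := by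
  have hint : HasDerivAt (fun x => ∫ ℓ in a..x, g ℓ) (g b) b :=
    intervalIntegral.integral_hasDerivAt_right
      ((intervalIntegrable_iff_integrableOn_Ioc_of_le hab.le).2 (hg.mono_set Ioc_subset_Ioi_self))
      (AEStronglyMeasurable.stronglyMeasurableAtFilter_of_mem hg.aestronglyMeasurable
        (Ioi_mem_nhds hab)) hgb
  refine (hint.const_sub (∫ ℓ in Ioi a, g ℓ)).congr_of_eventuallyEq ?_
  filter_upwards [Ioi_mem_nhds hab] with x hx
  rw [← intervalIntegral.integral_Ioi_sub_Ioi hg (le_of_lt hx), sub_sub_cancel]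

theorem lossCdf_le (p₀ : ℝ) {fL : ℝ → ℝ} {b : ℝ} (hfint : IntegrableOn fL (Ioi 0))
    (hf : ∀ ℓ, 0 < ℓ → 0 ≤ fL ℓ) (hb : 0 ≤ b) :
    lossCdf p₀ fL b ≤ p₀ + ∫ ℓ in Ioi (0:ℝ), fL ℓ := by
  rw [lossCdf, intervalIntegral.integral_of_le hb]
  exact add_le_add_right (setIntegral_mono_set hfint
    ((ae_restrict_iff' measurableSet_Ioi).2 (Eventually.of_forall hf))
    Ioc_subset_Ioi_self.eventuallyLE) p₀

section ChoiceFunction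

variable {k₁ k₂ t : ℝ}

theorem expEta_of_nonneg (ht : 0 ≤ t) :
    expEta k₁ k₂ t = 1 - (1 - k₂) * Real.exp (-(k₁ * t)) := if_pos ht

theorem expEta_of_neg (ht : t < 0) : expEta k₁ k₂ t = k₂ * Real.exp (k₁ * t) := if_neg ht.not_ge

theorem expEta_one_sub_neg (k₁ k₂ t : ℝ) : expEta k₁ (1 - k₂) (-t) = 1 - expEta k₁ k₂ t := by
  rcases lt_trichotomy t 0 with ht | rfl | ht
  · rw [expEta_of_nonneg (by linarith), expEta_of_neg ht]; ring_nf
  · simp [expEta]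
  · rw [expEta_of_neg (by linarith), expEta_of_nonneg ht.le]; ring_nf

theorem le_expEta (hk₁ : 0 ≤ k₁) (hk₂ : k₂ ≤ 1) (ht : 0 ≤ t) : k₂ ≤ expEta k₁ k₂ t := by
  rw [expEta_of_nonneg ht]
  nlinarith [Real.exp_le_one_iff.2 (neg_nonpos.2 (mul_nonneg hk₁ ht))]

theorem expEta_lt_one (hk₂ : k₂ < 1) (ht : 0 ≤ t) : expEta k₁ k₂ t < 1 := by
  rw [expEta_of_nonneg ht]
  nlinarith [Real.exp_pos (-(k₁ * t))]

theorem hasDerivAt_expEta (k₁ k₂ : ℝ) (ht : 0 < t) :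
    HasDerivAt (expEta k₁ k₂) (k₁ * (1 - expEta k₁ k₂ t)) t := by
  have h : HasDerivAt (fun u => 1 - (1 - k₂) * Real.exp (-(k₁ * u)))
      (k₁ * ((1 - k₂) * Real.exp (-(k₁ * t)))) t :=
    ((((hasDerivAt_id' t).const_mul k₁).fun_neg.exp).const_mul (1 - k₂)).const_sub 1
      |>.congr_deriv (by ring)
  rw [expEta_of_nonneg ht.le, sub_sub_cancel]
  exact h.congr_of_eventuallyEq
    (eventually_of_mem (Ioi_mem_nhds ht) fun u hu => expEta_of_nonneg (le_of_lt hu))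

end ChoiceFunction

theorem J2_eq_J1_one_sub (p₀ : ℝ) (fL : ℝ → ℝ) (δ κ k₁ k₂ θ θ' : ℝ) :
    J2 p₀ fL δ κ k₁ k₂ θ θ' = J1 p₀ fL δ κ k₁ (1 - k₂) θ θ' := by
  have hη : expEta k₁ (1 - k₂) (θ' - θ) = 1 - expEta k₁ k₂ (θ - θ') := by
    rw [← expEta_one_sub_neg, neg_sub]
  have hb : repBarrier δ κ k₁ (1 - k₂) θ θ' = repBarrier δ κ k₁ k₂ θ' θ := by
    simp only [repBarrier, hη]; ring
  simp only [J1, J2, aProb, mRep, hη, hb]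

/-- Profit per insured at premium `θ` when only losses above the barrier `b` are reported, so that
`J¹(θ₁; θ₂) = η̄ · premiumProfit θ₁ b*` and `J²(θ₂; θ₁) = (1 - η̄) · premiumProfit θ₂ b*`. -/
def premiumProfit (p₀ : ℝ) (fL : ℝ → ℝ) (κ θ b : ℝ) : ℝ :=
  θ * (lossCdf p₀ fL b + κ * (1 - lossCdf p₀ fL b)) - ∫ ℓ in Ioi b, ℓ * fL ℓ

section Derivatives

variable {p₀ δ κ k₁ k₂ θ₁ θ₂ : ℝ} {fL : ℝ → ℝ}

theorem HasDerivAt.mul_premiumProfit {s β : ℝ → ℝ} {s' β' θ : ℝ} (hs : HasDerivAt s s' θ)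
    (hβ : HasDerivAt β β' θ) (hb : 0 < β θ) (hfb : ContinuousAt fL (β θ))
    (hfint : IntegrableOn fL (Ioi 0)) (hmint : IntegrableOn (fun ℓ => ℓ * fL ℓ) (Ioi 0)) :
    HasDerivAt (fun x => s x * premiumProfit p₀ fL κ x (β x))
      (s' * premiumProfit p₀ fL κ θ (β θ) + s θ * (lossCdf p₀ fL (β θ)
        + κ * (1 - lossCdf p₀ fL (β θ)) + (β θ - (κ - 1) * θ) * fL (β θ) * β')) θ := by
  have hF := (hasDerivAt_lossCdf p₀ hfint hb hfb).comp θ hβ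
  have hm := (hasDerivAt_integral_Ioi hmint hb (continuousAt_id.mul hfb)).comp θ hβ
  exact hs.mul (((hasDerivAt_id θ).mul (hF.add ((hF.const_sub 1).const_mul κ))).sub hm)
    |>.congr_deriv (by
      simp only [premiumProfit, id, Pi.mul_apply, Pi.add_apply, Pi.sub_apply, Function.comp_apply]
      ring)

theorem hasDerivAt_J1_of_lt (hlt : θ₁ < θ₂) (hb : 0 < repBarrier δ κ k₁ k₂ θ₁ θ₂)
    (hfb : ContinuousAt fL (repBarrier δ κ k₁ k₂ θ₁ θ₂))
    (hfint : IntegrableOn fL (Ioi 0)) (hmint : IntegrableOn (fun ℓ => ℓ * fL ℓ) (Ioi 0)) :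
    HasDerivAt (fun θ => J1 p₀ fL δ κ k₁ k₂ θ θ₂)
      (-(k₁ * (1 - expEta k₁ k₂ (θ₂ - θ₁)))
          * premiumProfit p₀ fL κ θ₁ (repBarrier δ κ k₁ k₂ θ₁ θ₂)
        + expEta k₁ k₂ (θ₂ - θ₁) * (lossCdf p₀ fL (repBarrier δ κ k₁ k₂ θ₁ θ₂)
          + κ * (1 - lossCdf p₀ fL (repBarrier δ κ k₁ k₂ θ₁ θ₂))
          + (repBarrier δ κ k₁ k₂ θ₁ θ₂ - (κ - 1) * θ₁) * fL (repBarrier δ κ k₁ k₂ θ₁ θ₂)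
            * (δ * (κ - 1) * (expEta k₁ k₂ (θ₂ - θ₁)
              + k₁ * (1 - expEta k₁ k₂ (θ₂ - θ₁)) * (θ₂ - θ₁))))) θ₁ := by
  have hη : HasDerivAt (fun θ => expEta k₁ k₂ (θ₂ - θ))
      (-(k₁ * (1 - expEta k₁ k₂ (θ₂ - θ₁)))) θ₁ :=
    (hasDerivAt_expEta k₁ k₂ (sub_pos.2 hlt)).comp_const_sub θ₂ θ₁
  have hβ : HasDerivAt (fun θ => repBarrier δ κ k₁ k₂ θ θ₂)
      (δ * (κ - 1) * (expEta k₁ k₂ (θ₂ - θ₁) + k₁ * (1 - expEta k₁ k₂ (θ₂ - θ₁)) * (θ₂ - θ₁)))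
      θ₁ :=
    ((hη.mul (hasDerivAt_id θ₁)).add ((hη.const_sub 1).mul_const θ₂)).const_mul (δ * (κ - 1))
      |>.congr_deriv (by simp only [id]; ring)
  exact hη.mul_premiumProfit hβ hb hfb hfint hmint

theorem hasDerivAt_J2_of_lt (hlt : θ₁ < θ₂) (hb : 0 < repBarrier δ κ k₁ k₂ θ₁ θ₂)
    (hfb : ContinuousAt fL (repBarrier δ κ k₁ k₂ θ₁ θ₂))
    (hfint : IntegrableOn fL (Ioi 0)) (hmint : IntegrableOn (fun ℓ => ℓ * fL ℓ) (Ioi 0)) :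
    HasDerivAt (fun θ => J2 p₀ fL δ κ k₁ k₂ θ θ₁)
      (-(k₁ * (1 - expEta k₁ k₂ (θ₂ - θ₁)))
          * premiumProfit p₀ fL κ θ₂ (repBarrier δ κ k₁ k₂ θ₁ θ₂)
        + (1 - expEta k₁ k₂ (θ₂ - θ₁)) * (lossCdf p₀ fL (repBarrier δ κ k₁ k₂ θ₁ θ₂)
          + κ * (1 - lossCdf p₀ fL (repBarrier δ κ k₁ k₂ θ₁ θ₂))
          + (repBarrier δ κ k₁ k₂ θ₁ θ₂ - (κ - 1) * θ₂) * fL (repBarrier δ κ k₁ k₂ θ₁ θ₂)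
            * (δ * (κ - 1) * ((1 - expEta k₁ k₂ (θ₂ - θ₁))
              - k₁ * (1 - expEta k₁ k₂ (θ₂ - θ₁)) * (θ₂ - θ₁))))) θ₂ := by
  have hη : HasDerivAt (fun θ => expEta k₁ k₂ (θ - θ₁))
      (k₁ * (1 - expEta k₁ k₂ (θ₂ - θ₁))) θ₂ :=
    (hasDerivAt_expEta k₁ k₂ (sub_pos.2 hlt)).comp_sub_const θ₂ θ₁
  have hβ : HasDerivAt (fun θ => repBarrier δ κ k₁ k₂ θ₁ θ)
      (δ * (κ - 1) * ((1 - expEta k₁ k₂ (θ₂ - θ₁))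
        - k₁ * (1 - expEta k₁ k₂ (θ₂ - θ₁)) * (θ₂ - θ₁))) θ₂ :=
    ((hη.mul_const θ₁).add ((hη.const_sub 1).mul (hasDerivAt_id θ₂))).const_mul (δ * (κ - 1))
      |>.congr_deriv (by simp only [id]; ring)
  exact (hη.const_sub 1).mul_premiumProfit hβ hb hfb hfint hmint

end Derivatives

theorem repBarrier_mem_IL {δ κ k₁ k₂ μ M θ₁ θ₂ : ℝ} (hδ : 0 ≤ δ) (hκ : 1 ≤ κ)
    (hη : expEta k₁ k₂ (θ₂ - θ₁) ∈ Icc 0 1) (hθ₁ : θ₁ ∈ Theta μ M κ) (hθ₂ : θ₂ ∈ Theta μ M κ) :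
    repBarrier δ κ k₁ k₂ θ₁ θ₂ ∈ IL δ κ μ M := by
  have hmix := convex_Icc μ (M / κ) hθ₁ hθ₂ hη.1 (sub_nonneg.2 hη.2) (add_sub_cancel _ _)
  have hscale : 0 ≤ δ * (κ - 1) := mul_nonneg hδ (sub_nonneg.2 hκ)
  exact ⟨mul_le_mul_of_nonneg_left hmix.1 hscale, mul_le_mul_of_nonneg_left hmix.2 hscale⟩

theorem marginalProfit_gap {δ κ k₁ η θ₁ θ₂ a m q B : ℝ} (hδ : δ ∈ Ioo 0 1) (hκ : 1 < κ)
    (hk₁ : 0 ≤ k₁) (hη : η ∈ Ico (1 / 2) 1) (hθ : θ₁ < θ₂) (hq : 0 < q) (ha : a ≤ 1)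
    (hB : B = δ * (κ - 1) * (η * θ₁ + (1 - η) * θ₂))
    (hcap : B * q ≤ 1 / ((1 - δ) * (κ - 1))) :
    -(k₁ * (1 - η)) * (θ₂ * (a + κ * (1 - a)) - m) + (1 - η) * (a + κ * (1 - a)
        + (B - (κ - 1) * θ₂) * q * (δ * (κ - 1) * ((1 - η) - k₁ * (1 - η) * (θ₂ - θ₁))))
      < -(k₁ * (1 - η)) * (θ₁ * (a + κ * (1 - a)) - m) + η * (a + κ * (1 - a)
        + (B - (κ - 1) * θ₁) * q * (δ * (κ - 1) * (η + k₁ * (1 - η) * (θ₂ - θ₁)))) := by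
  obtain ⟨hδ₀, hδ₁⟩ := hδ
  obtain ⟨hη₀, hη₁⟩ := hη
  have hcap' : B * q * ((1 - δ) * (κ - 1)) ≤ 1 :=
    (le_div_iff₀ (mul_pos (sub_pos.2 hδ₁) (sub_pos.2 hκ))).1 hcap
  have hc : 1 ≤ a + κ * (1 - a) := by nlinarith
  have hweight : 0 ≤ 2 * η - 1 + k₁ * (1 - η) * (θ₂ - θ₁) := by
    have : 0 ≤ k₁ * (1 - η) * (θ₂ - θ₁) := by
      have := sub_pos.2 hη₁; have := sub_pos.2 hθ; positivity
    linarith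
  have hspread : 0 < q * δ * (κ - 1) ^ 2 * η * (1 - η) * (θ₂ - θ₁) := by
    have := sub_pos.2 hη₁; have := sub_pos.2 hθ; have := sub_pos.2 hκ
    have : 0 < η := by linarith
    positivity
  have hdiff : (-(k₁ * (1 - η)) * (θ₂ * (a + κ * (1 - a)) - m) + (1 - η) * (a + κ * (1 - a)
        + (B - (κ - 1) * θ₂) * q * (δ * (κ - 1) * ((1 - η) - k₁ * (1 - η) * (θ₂ - θ₁)))))
      - (-(k₁ * (1 - η)) * (θ₁ * (a + κ * (1 - a)) - m) + η * (a + κ * (1 - a)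
        + (B - (κ - 1) * θ₁) * q * (δ * (κ - 1) * (η + k₁ * (1 - η) * (θ₂ - θ₁)))))
      = (2 * η - 1 + k₁ * (1 - η) * (θ₂ - θ₁)) * (B * q * ((1 - δ) * (κ - 1)) - (a + κ * (1 - a)))
        - q * δ * (κ - 1) ^ 2 * η * (1 - η) * (θ₂ - θ₁) := by
    subst hB; ring
  nlinarith [mul_nonpos_of_nonneg_of_nonpos hweight (by linarith : B * q * ((1 - δ) * (κ - 1))
    - (a + κ * (1 - a)) ≤ 0)]

theorem premium_le_of_half_le {p₀ δ κ M k₁ k₂ μ : ℝ} {fL : ℝ → ℝ} {θs₁ θs₂ : ℝ}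
    (hδ : δ ∈ Ioo 0 1) (hκ : 1 < κ) (hk₁ : 0 ≤ k₁) (hk₂ : k₂ < 1) (hk : 1 / 2 ≤ k₂)
    (hfpos : ∀ ℓ : ℝ, 0 < ℓ → 0 < fL ℓ) (hfc : ∀ ℓ : ℝ, 0 < ℓ → ContinuousAt fL ℓ)
    (hfint : IntegrableOn fL (Ioi 0)) (hftot : ∫ ℓ in Ioi (0:ℝ), fL ℓ = 1 - p₀)
    (hmint : IntegrableOn (fun ℓ => ℓ * fL ℓ) (Ioi 0)) (hμ : 0 < μ)
    (hcond : ∀ ℓ ∈ IL δ κ μ M, ℓ * fL ℓ ≤ 1 / ((1 - δ) * (κ - 1)))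
    (hθs₁ : θs₁ ∈ Theta μ M κ) (hθs₂ : θs₂ ∈ Theta μ M κ)
    (hmax₁ : IsMaxOn (fun θ => J1 p₀ fL δ κ k₁ k₂ θ θs₂) (Theta μ M κ) θs₁)
    (hmax₂ : IsMaxOn (fun θ => J2 p₀ fL δ κ k₁ k₂ θ θs₁) (Theta μ M κ) θs₂) :
    θs₂ ≤ θs₁ := by
  by_contra! hlt
  have hη : expEta k₁ k₂ (θs₂ - θs₁) ∈ Ico (1 / 2) 1 :=
    ⟨hk.trans (le_expEta hk₁ hk₂.le (sub_nonneg.2 hlt.le)), expEta_lt_one hk₂ (sub_nonneg.2 hlt.le)⟩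
  have hB : repBarrier δ κ k₁ k₂ θs₁ θs₂ ∈ IL δ κ μ M :=
    repBarrier_mem_IL hδ.1.le hκ.le ⟨by linarith [hη.1], hη.2.le⟩ hθs₁ hθs₂
  have hBpos : 0 < repBarrier δ κ k₁ k₂ θs₁ θs₂ :=
    lt_of_lt_of_le (mul_pos (mul_pos hδ.1 (sub_pos.2 hκ)) hμ) hB.1
  have hcdf : lossCdf p₀ fL (repBarrier δ κ k₁ k₂ θs₁ θs₂) ≤ 1 := by
    linarith [lossCdf_le p₀ hfint (fun ℓ hℓ => (hfpos ℓ hℓ).le) hBpos.le]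
  have hfoc₁ := (hasDerivAt_J1_of_lt hlt hBpos (hfc _ hBpos) hfint hmint).nonpos_of_isMaxOn_Icc
    hmax₁ hθs₁.1 (hlt.trans_le hθs₂.2)
  have hfoc₂ := (hasDerivAt_J2_of_lt hlt hBpos (hfc _ hBpos) hfint hmint).nonneg_of_isMaxOn_Icc
    hmax₂ (hθs₁.1.trans_lt hlt) hθs₂.2
  exact (marginalProfit_gap hδ hκ hk₁ hη hlt (hfpos _ hBpos) hcdf rfl (hcond _ hB)).not_ge
    (hfoc₁.trans hfoc₂)

theorem stmt_12_general (p₀ δ κ M k₁ k₂ μ : ℝ) (fL fL' : ℝ → ℝ) (θs₁ θs₂ : ℝ)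
    (hδ : δ ∈ Set.Ioo (0:ℝ) 1)
    (hκ : κ ∈ Set.Ioo (1:ℝ) 2)
    (hk₁ : k₁ ∈ Set.Ioo (0:ℝ) 1) (hk₂ : k₂ ∈ Set.Ioo (0:ℝ) 1)
    (hfpos : ∀ ℓ : ℝ, 0 < ℓ → 0 < fL ℓ)
    (hfd : ∀ ℓ : ℝ, 0 < ℓ → HasDerivAt fL (fL' ℓ) ℓ)
    (hfint : IntegrableOn fL (Set.Ioi 0))
    (hftot : ∫ ℓ in Set.Ioi (0:ℝ), fL ℓ = 1 - p₀)
    (hmint : IntegrableOn (fun ℓ => ℓ * fL ℓ) (Set.Ioi 0))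
    (hμpos : 0 < μ)
    (hcond : ∀ ℓ ∈ IL δ κ μ M, ℓ * fL ℓ ≤ 1 / ((1 - δ) * (κ - 1)))
    (hθs₁ : θs₁ ∈ Theta μ M κ) (hθs₂ : θs₂ ∈ Theta μ M κ)
    (heq₁ : ∀ θ ∈ Theta μ M κ, J1 p₀ fL δ κ k₁ k₂ θ θs₂ ≤ J1 p₀ fL δ κ k₁ k₂ θs₁ θs₂)
    (heq₂ : ∀ θ ∈ Theta μ M κ, J2 p₀ fL δ κ k₁ k₂ θ θs₁ ≤ J2 p₀ fL δ κ k₁ k₂ θs₂ θs₁) :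
    (1 / 2 ≤ k₂ → θs₂ ≤ θs₁) ∧ (k₂ ≤ 1 / 2 → θs₁ ≤ θs₂) ∧
    (k₂ = 1 / 2 → θs₁ = θs₂) := by
  have hfc : ∀ ℓ : ℝ, 0 < ℓ → ContinuousAt fL ℓ := fun ℓ hℓ => (hfd ℓ hℓ).continuousAt
  have h₂₁ : 1 / 2 ≤ k₂ → θs₂ ≤ θs₁ := fun hk =>
    premium_le_of_half_le hδ hκ.1 hk₁.1.le hk₂.2 hk hfpos hfc hfint hftot hmint hμpos hcond
      hθs₁ hθs₂ heq₁ heq₂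
  have h₁₂ : k₂ ≤ 1 / 2 → θs₁ ≤ θs₂ := fun hk =>
    premium_le_of_half_le (k₂ := 1 - k₂) hδ hκ.1 hk₁.1.le (by linarith [hk₂.1]) (by linarith)
      hfpos hfc hfint hftot hmint hμpos hcond hθs₂ hθs₁
      (isMaxOn_iff.2 (by simpa only [J2_eq_J1_one_sub] using heq₂))
      (isMaxOn_iff.2 (by simpa only [J2_eq_J1_one_sub, sub_sub_cancel] using heq₁))
  exact ⟨h₂₁, h₁₂, fun hk => le_antisymm (h₁₂ hk.le) (h₂₁ hk.ge)⟩

/-- Proposition 4.1: the ordering of equilibrium premiums is determined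
by the insureds' intrinsic preference `k₂`. -/
theorem stmt_12 (p₀ δ κ M k₁ k₂ μ : ℝ) (fL fL' : ℝ → ℝ) (θs₁ θs₂ : ℝ)
    (hp₀ : p₀ ∈ Set.Ioo (0:ℝ) 1) (hδ : δ ∈ Set.Ioo (0:ℝ) 1)
    (hκ : κ ∈ Set.Ioo (1:ℝ) 2)
    (hk₁ : k₁ ∈ Set.Ioo (0:ℝ) 1) (hk₂ : k₂ ∈ Set.Ioo (0:ℝ) 1)
    (hfpos : ∀ ℓ : ℝ, 0 < ℓ → 0 < fL ℓ)
    (hfd : ∀ ℓ : ℝ, 0 < ℓ → HasDerivAt fL (fL' ℓ) ℓ)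
    (hfd_cont : ContinuousOn fL' (Set.Ioi 0))
    (hfint : IntegrableOn fL (Set.Ioi 0))
    (hftot : ∫ ℓ in Set.Ioi (0:ℝ), fL ℓ = 1 - p₀)
    (hmint : IntegrableOn (fun ℓ => ℓ * fL ℓ) (Set.Ioi 0))
    (hμ : μ = ∫ ℓ in Set.Ioi (0:ℝ), ℓ * fL ℓ) (hμpos : 0 < μ) (hM : κ * μ ≤ M)
    (hcond : ∀ ℓ ∈ IL δ κ μ M, ℓ * fL ℓ ≤ 1 / ((1 - δ) * (κ - 1)))
    (hθs₁ : θs₁ ∈ Theta μ M κ) (hθs₂ : θs₂ ∈ Theta μ M κ)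
    (heq₁ : ∀ θ ∈ Theta μ M κ, J1 p₀ fL δ κ k₁ k₂ θ θs₂ ≤ J1 p₀ fL δ κ k₁ k₂ θs₁ θs₂)
    (heq₂ : ∀ θ ∈ Theta μ M κ, J2 p₀ fL δ κ k₁ k₂ θ θs₁ ≤ J2 p₀ fL δ κ k₁ k₂ θs₂ θs₁) :
    (1 / 2 ≤ k₂ → θs₂ ≤ θs₁) ∧ (k₂ ≤ 1 / 2 → θs₁ ≤ θs₂) ∧
    (k₂ = 1 / 2 → θs₁ = θs₂) :=
  stmt_12_general p₀ δ κ M k₁ k₂ μ fL fL' θs₁ θs₂ hδ hκ hk₁ hk₂ hfpos hfd hfint hftot hmint hμpos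
    hcond hθs₁ hθs₂ heq₁ heq₂

end
end
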